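/- Let σ ∈ S_n have cycle supports ᾱ₁,...,ᾱ_k partitioning [n]. The fixed polytope P_{n-1}^σ = {p ∈ P_{n-1} : M_σ p = p} equals the zonotope Z(u_{ᾱ₁}, ..., u_{ᾱ_k}) = Σ_{i=1}^k [0, u_{ᾱ_i}]. -/

import Mathlib

open Pointwise

/-- The generators `u₁, …, u_n` of `P_{n-1} ⊂ ℝ^(n-1)`: `u_j = e_j` for `j < n` and
`u_n = -𝟙`, with `n = m+1`. -/
noncomputable def uVec (m : ℕ) (j : Fin (m + 1)) : Fin m → ℝ :=
  if h : (j : ℕ) < m then Pi.single ⟨j, h⟩ 1 else fun _ => -1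

/-- The vertex `u_I = Σ_{j∈I} u_j` of `P_{n-1}`. -/
noncomputable def uSet (m : ℕ) (I : Finset (Fin (m + 1))) : Fin m → ℝ :=
  ∑ j ∈ I, uVec m j

/-- The zonotope `P_{n-1} = Z(u₁, …, u_n)`. -/
noncomputable def Pzono (m : ℕ) : Set (Fin m → ℝ) :=
  ∑ j : Fin (m + 1), segment ℝ 0 (uVec m j)

/-- The matrix `M_σ` of the `S_n`-action on `ℝ^(n-1)`, with `n = m+1`. -/
noncomputable def Msigma (m : ℕ) (σ : Equiv.Perm (Fin (m + 1))) : Matrix (Fin m) (Fin m) ℝ :=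
  Matrix.of fun i j =>
    if σ j.castSucc = i.castSucc then 1
    else if σ j.castSucc = Fin.last m then -1 else 0

/-- The cycle supports of `σ` (including fixed points as 1-cycles): the orbits of `σ`
on `[n]`, as a finset of finsets. -/
noncomputable def cycleSupports (m : ℕ) (σ : Equiv.Perm (Fin (m + 1))) :
    Finset (Finset (Fin (m + 1))) :=
  Finset.univ.image fun x => Finset.univ.filter fun y => σ.SameCycle x y


lemma uVec_apply (m : ℕ) (k : Fin (m + 1)) (i : Fin m) :
    uVec m k i = if k = i.castSucc then 1 else if k = Fin.last m then -1 else 0 := by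
  unfold uVec
  by_cases h : (k : ℕ) < m
  · have hk : k ≠ Fin.last m := by
      intro he; rw [he] at h; simp at h
    rw [dif_pos h, Pi.single_apply, if_neg hk]
    by_cases hc : k = i.castSucc
    · have : (⟨(k:ℕ), h⟩ : Fin m) = i := by
        simp [hc]
      rw [if_pos hc, this, if_pos rfl]
    · rw [if_neg hc, if_neg]
      intro he
      exact hc (by apply Fin.ext; rw [he]; simp)
  · have hk : k = Fin.last m := by
      apply Fin.ext; simp; omega
    subst hk
    rw [dif_neg h, if_neg (Fin.castSucc_lt_last i).ne', if_pos rfl]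

lemma Msigma_apply (m : ℕ) (σ : Equiv.Perm (Fin (m + 1))) (i j : Fin m) :
    Msigma m σ i j = uVec m (σ j.castSucc) i := by
  rw [uVec_apply]; rfl

lemma mulVec_Msigma (m : ℕ) (σ : Equiv.Perm (Fin (m + 1))) (p : Fin m → ℝ) :
    (Msigma m σ).mulVec p = ∑ j : Fin m, p j • uVec m (σ j.castSucc) := by
  funext i
  simp only [Matrix.mulVec, dotProduct, Finset.sum_apply, Pi.smul_apply, smul_eq_mul,
    Msigma_apply]
  exact Finset.sum_congr rfl fun j _ => mul_comm _ _

lemma sum_uVec (m : ℕ) : ∑ j : Fin (m + 1), uVec m j = 0 := by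
  rw [Fin.sum_univ_castSucc]
  have h1 : ∀ i : Fin m, uVec m i.castSucc = Pi.single i (1:ℝ) := fun i => by
    simp [uVec, i.is_lt]
  simp only [h1]
  rw [Finset.univ_sum_single]
  funext i
  simp [uVec]

lemma Msigma_uVec (m : ℕ) (σ : Equiv.Perm (Fin (m + 1))) (j : Fin (m + 1)) :
    (Msigma m σ).mulVec (uVec m j) = uVec m (σ j) := by
  rw [mulVec_Msigma]
  by_cases h : (j : ℕ) < m
  · have hu : uVec m j = Pi.single (⟨j, h⟩ : Fin m) 1 := by simp [uVec, h]
    have hcs : (⟨(j:ℕ), h⟩ : Fin m).castSucc = j := by apply Fin.ext; simp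
    rw [hu]
    rw [Finset.sum_eq_single (⟨(j:ℕ), h⟩ : Fin m)]
    · rw [Pi.single_eq_same, hcs, one_smul]
    · intro b _ hb
      rw [Pi.single_eq_of_ne hb, zero_smul]
    · intro hb; exact absurd (Finset.mem_univ _) hb
  · have hk : j = Fin.last m := by apply Fin.ext; simp; omega
    subst hk
    have hu : uVec m (Fin.last m) = fun _ => -1 := by simp [uVec]
    rw [hu]
    have key : ∑ j : Fin m, uVec m (σ j.castSucc) = - uVec m (σ (Fin.last m)) := by
      have h2 : ∑ k : Fin (m+1), uVec m (σ k) = 0 := by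
        rw [Equiv.sum_comp σ (uVec m), sum_uVec]
      rw [Fin.sum_univ_castSucc] at h2
      linear_combination (norm := abel) h2
    calc ∑ j : Fin m, (-1 : ℝ) • uVec m (σ j.castSucc)
        = (-1 : ℝ) • ∑ j : Fin m, uVec m (σ j.castSucc) := by rw [Finset.smul_sum]
      _ = uVec m (σ (Fin.last m)) := by rw [key]; module

lemma const_of_rel (m : ℕ) (c : Fin (m + 1) → ℝ) (h : ∑ j, c j • uVec m j = 0) :
    ∀ j, c j = c (Fin.last m) := by
  intro j
  by_cases hj : (j : ℕ) < m
  · set i : Fin m := ⟨j, hj⟩ with hi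
    have hji : j = i.castSucc := by apply Fin.ext; simp [hi]
    have h0 := congrFun h i
    rw [Finset.sum_apply] at h0
    simp only [Pi.smul_apply, smul_eq_mul, uVec_apply, Pi.zero_apply] at h0
    have hterm : ∀ k : Fin (m + 1),
        c k * (if k = i.castSucc then 1 else if k = Fin.last m then -1 else 0)
          = (if k = i.castSucc then c k else 0) + (if k = Fin.last m then -(c k) else 0) := by
      intro k
      by_cases h1 : k = i.castSucc
      · have h2 : k ≠ Fin.last m := by
          rw [h1]; exact (Fin.castSucc_lt_last i).ne
        rw [if_pos h1, if_pos h1, if_neg h2, mul_one, add_zero]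
      · rw [if_neg h1, if_neg h1, zero_add]
        by_cases h2 : k = Fin.last m
        · rw [if_pos h2, if_pos h2, mul_neg_one]
        · rw [if_neg h2, if_neg h2, mul_zero]
    rw [Finset.sum_congr rfl fun k _ => hterm k, Finset.sum_add_distrib,
      Finset.sum_ite_eq' Finset.univ i.castSucc c,
      Finset.sum_ite_eq' Finset.univ (Fin.last m) (fun k => -(c k)),
      if_pos (Finset.mem_univ _), if_pos (Finset.mem_univ _)] at h0
    rw [hji]
    linarith
  · have : j = Fin.last m := by apply Fin.ext; simp; omega
    rw [this]

noncomputable def orb {m : ℕ} (σ : Equiv.Perm (Fin (m + 1))) (x : Fin (m + 1)) :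
    Finset (Fin (m + 1)) :=
  Finset.univ.filter fun y => σ.SameCycle x y

lemma mem_orb {m : ℕ} (σ : Equiv.Perm (Fin (m + 1))) (x y : Fin (m + 1)) :
    y ∈ orb σ x ↔ σ.SameCycle x y := by simp [orb]

lemma orb_self {m : ℕ} (σ : Equiv.Perm (Fin (m + 1))) (x : Fin (m + 1)) : x ∈ orb σ x := by
  simp only [mem_orb]
  exact Equiv.Perm.SameCycle.refl σ x

lemma orb_eq_of_mem {m : ℕ} (σ : Equiv.Perm (Fin (m + 1))) {x y : Fin (m + 1)}
    (h : y ∈ orb σ x) : orb σ y = orb σ x := by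
  rw [mem_orb] at h
  ext z
  rw [mem_orb, mem_orb]
  exact ⟨fun hz => h.trans hz, fun hz => h.symm.trans hz⟩

lemma orb_mem_cycleSupports {m : ℕ} (σ : Equiv.Perm (Fin (m + 1))) (x : Fin (m + 1)) :
    orb σ x ∈ cycleSupports m σ :=
  Finset.mem_image_of_mem _ (Finset.mem_univ x)

lemma exists_orb {m : ℕ} (σ : Equiv.Perm (Fin (m + 1))) {c : Finset (Fin (m + 1))}
    (hc : c ∈ cycleSupports m σ) : ∃ x, c = orb σ x := by
  rw [cycleSupports, Finset.mem_image] at hc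
  obtain ⟨x, _, hx⟩ := hc
  exact ⟨x, hx.symm⟩

lemma sum_over_cycles {m : ℕ} (σ : Equiv.Perm (Fin (m + 1))) {V : Type*} [AddCommMonoid V]
    (F : Fin (m + 1) → V) :
    ∑ c ∈ cycleSupports m σ, ∑ j ∈ c, F j = ∑ j, F j := by
  classical
  have huniv : (cycleSupports m σ).biUnion id = Finset.univ := by
    ext j
    simp only [Finset.mem_biUnion, id, Finset.mem_univ, iff_true]
    exact ⟨orb σ j, orb_mem_cycleSupports σ j, orb_self σ j⟩
  have hdisj : ((cycleSupports m σ : Set (Finset (Fin (m + 1))))).PairwiseDisjoint id := by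
    intro c hc c' hc' hne
    simp only [Finset.mem_coe] at hc hc'
    obtain ⟨x, rfl⟩ := exists_orb σ hc
    obtain ⟨y, rfl⟩ := exists_orb σ hc'
    simp only [id, Finset.disjoint_left]
    intro z hz hz'
    exact hne ((orb_eq_of_mem σ hz).symm.trans (orb_eq_of_mem σ hz'))
  calc ∑ c ∈ cycleSupports m σ, ∑ j ∈ c, F j
      = ∑ c ∈ cycleSupports m σ, ∑ j ∈ id c, F j := rfl
    _ = ∑ j ∈ (cycleSupports m σ).biUnion id, F j := (Finset.sum_biUnion hdisj).symm
    _ = ∑ j, F j := by rw [huniv]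

lemma mem_segment_zero {m : ℕ} (v x : Fin m → ℝ) :
    x ∈ segment ℝ 0 v ↔ ∃ t : ℝ, 0 ≤ t ∧ t ≤ 1 ∧ t • v = x := by
  rw [segment_eq_image]
  constructor
  · rintro ⟨t, ht, rfl⟩
    exact ⟨t, ht.1, ht.2, by simp⟩
  · rintro ⟨t, ht0, ht1, rfl⟩
    exact ⟨t, ⟨ht0, ht1⟩, by simp⟩

lemma t_const_on_cycle {m : ℕ} (σ : Equiv.Perm (Fin (m + 1))) (t : Fin (m + 1) → ℝ)
    (ht : ∀ j, t (σ j) = t j) {x y : Fin (m + 1)} (h : σ.SameCycle x y) : t x = t y := by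
  have hpow : ∀ n : ℕ, ∀ z, t ((σ ^ n) z) = t z := by
    intro n
    induction n with
    | zero => intro z; simp
    | succ k ih =>
        intro z
        rw [pow_succ, Equiv.Perm.mul_apply, ih (σ z), ht z]
  obtain ⟨i, _, rfl⟩ := h.exists_pow_eq'
  exact (hpow i x).symm

lemma mulVec_combo (m : ℕ) (σ : Equiv.Perm (Fin (m + 1))) (t : Fin (m + 1) → ℝ) :
    (Msigma m σ).mulVec (∑ j, t j • uVec m j) = ∑ j, t j • uVec m (σ j) := by
  rw [← Matrix.mulVecLin_apply, map_sum]
  simp only [map_smul, Matrix.mulVecLin_apply, Msigma_uVec]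


/-- the fixed polytope `P_{n-1}^σ = {p ∈ P_{n-1} : M_σ p = p}` equals the
zonotope `Z(u_{ᾱ₁}, …, u_{ᾱ_k}) = Σᵢ [0, u_{ᾱᵢ}]`, where `ᾱ₁, …, ᾱ_k` are the cycle
supports of `σ` (with `n = m+1`). -/
theorem fixed_polytope_eq_zonotope (m : ℕ) (σ : Equiv.Perm (Fin (m + 1))) :
    {p ∈ Pzono m | (Msigma m σ).mulVec p = p}
      = ∑ c ∈ cycleSupports m σ, segment ℝ 0 (uSet m c) := by
  ext x
  simp only [Set.mem_setOf_eq]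
  constructor
  · rintro ⟨hP, hfix⟩
    rw [Pzono, Set.mem_finset_sum] at hP
    obtain ⟨g, hg, hsum⟩ := hP
    have hex : ∀ j : Fin (m + 1), ∃ t : ℝ, (0 ≤ t ∧ t ≤ 1) ∧ t • uVec m j = g j := by
      intro j
      rcases (mem_segment_zero _ _).1 (hg (Finset.mem_univ j)) with ⟨t, h0, h1, he⟩
      exact ⟨t, ⟨h0, h1⟩, he⟩
    choose t htb hteq using hex
    have hx : x = ∑ j, t j • uVec m j := by
      rw [← hsum]
      exact (Finset.sum_congr rfl fun j _ => (hteq j)).symm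
    have hfix2 : ∑ j, t j • uVec m (σ j) = ∑ j, t j • uVec m j := by
      have h := hfix
      rw [hx, mulVec_combo] at h
      exact h
    have hre : ∑ j, t (σ.symm j) • uVec m j = ∑ j, t j • uVec m j := by
      rw [← hfix2, ← Equiv.sum_comp σ (fun j => t (σ.symm j) • uVec m j)]
      simp
    have hker : ∑ j, (t (σ.symm j) - t j) • uVec m j = 0 := by
      simp only [sub_smul]
      rw [Finset.sum_sub_distrib, hre, sub_self]
    have hconst := const_of_rel m _ hker
    have hsum0 : ∑ j, (t (σ.symm j) - t j) = 0 := by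
      rw [Finset.sum_sub_distrib, Equiv.sum_comp σ.symm t, sub_self]
    have hd0 : t (σ.symm (Fin.last m)) - t (Fin.last m) = 0 := by
      rw [Finset.sum_congr rfl (fun j _ => hconst j), Finset.sum_const, Finset.card_univ,
        Fintype.card_fin, nsmul_eq_mul] at hsum0
      have hm : ((m : ℝ) + 1) ≠ 0 := by positivity
      rcases mul_eq_zero.mp hsum0 with h | h
      · exact absurd h (by push_cast; exact hm)
      · exact h
    have hts : ∀ j, t (σ j) = t j := by
      intro j
      have h := hconst (σ j)
      rw [Equiv.symm_apply_apply, hd0] at h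
      linarith
    rw [Set.mem_finset_sum]
    refine ⟨fun c => ∑ j ∈ c, t j • uVec m j, ?_, ?_⟩
    · intro c hc
      obtain ⟨z, rfl⟩ := exists_orb σ hc
      rw [mem_segment_zero]
      refine ⟨t z, (htb z).1, (htb z).2, ?_⟩
      rw [uSet, Finset.smul_sum]
      exact (Finset.sum_congr rfl fun j hj => by
        rw [t_const_on_cycle σ t hts ((mem_orb σ z j).1 hj)]).symm
    · rw [sum_over_cycles σ (fun j => t j • uVec m j), ← hx]
  · rw [Set.mem_finset_sum]
    rintro ⟨g, hg, hsum⟩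
    have hex : ∀ c : Finset (Fin (m + 1)), ∃ s : ℝ, c ∈ cycleSupports m σ →
        (0 ≤ s ∧ s ≤ 1 ∧ s • uSet m c = g c) := by
      intro c
      by_cases hc : c ∈ cycleSupports m σ
      · obtain ⟨s, h0, h1, he⟩ := (mem_segment_zero _ _).1 (hg hc)
        exact ⟨s, fun _ => ⟨h0, h1, he⟩⟩
      · exact ⟨0, fun h => absurd h hc⟩
    choose S hS using hex
    set t : Fin (m + 1) → ℝ := fun j => S (orb σ j) with htdef
    have hxt : x = ∑ j, t j • uVec m j := by
      rw [← hsum, ← sum_over_cycles σ (fun j => t j • uVec m j)]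
      apply Finset.sum_congr rfl
      intro c hc
      obtain ⟨z, rfl⟩ := exists_orb σ hc
      obtain ⟨h0, h1, he⟩ := hS (orb σ z) hc
      rw [← he, uSet, Finset.smul_sum]
      apply Finset.sum_congr rfl
      intro j hj
      show S (orb σ z) • uVec m j = S (orb σ j) • uVec m j
      rw [orb_eq_of_mem σ hj]
    have htconst : ∀ j, t (σ.symm j) = t j := by
      intro j
      show S (orb σ (σ.symm j)) = S (orb σ j)
      congr 1
      apply orb_eq_of_mem
      rw [mem_orb]
      exact Equiv.Perm.sameCycle_symm_apply_right.2 (Equiv.Perm.SameCycle.refl σ j)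
    constructor
    · rw [Pzono, Set.mem_finset_sum]
      refine ⟨fun j => t j • uVec m j, ?_, hxt.symm⟩
      intro j _
      rw [mem_segment_zero]
      obtain ⟨h0, h1, _⟩ := hS (orb σ j) (orb_mem_cycleSupports σ j)
      exact ⟨t j, h0, h1, rfl⟩
    · rw [hxt, mulVec_combo]
      calc ∑ j, t j • uVec m (σ j)
          = ∑ j, t (σ.symm (σ j)) • uVec m (σ j) := by
            simp only [Equiv.symm_apply_apply]
        _ = ∑ k, t (σ.symm k) • uVec m k :=
            Equiv.sum_comp σ (fun k => t (σ.symm k) • uVec m k)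
        _ = ∑ k, t k • uVec m k := Finset.sum_congr rfl fun k _ => by rw [htconst k]
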